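/- arXiv:1907.09587 — 4 statements merged into one kernel-verified Lean document; each statement's English description precedes it below -/
import Mathlib

section
/- The number of cycles of a uniformly random permutation of [n] has the same distribution as the sum B_1 + B_2 + ⋯ + B_n of independent Bernoulli random variables where B_i has success probability 1/i. -/
open MeasureTheory ProbabilityTheory
open scoped ENNReal

/-- The number of cycles of a permutation of `Fin n` (including fixed points),
counted as the number of cycle minima. -/
noncomputable def numCycles {n : ℕ} (π : Equiv.Perm (Fin n)) : ℕ :=
  Nat.card {a : Fin n // ∀ m : ℕ, a ≤ (⇑π)^[m] a}

/-!
Count cycles by their minima. Under `Equiv.Perm.decomposeFin`, a permutation of `Fin (n + 1)`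
corresponds to a pair `(p, e)` with `e` a permutation of `Fin n`: for `p = 0` the point `0` is a
new fixed point, and for `p = q.succ` it is inserted into the cycle of `e` through `q`, where it
becomes the minimum in place of the old one. So `numCycles` goes up by one for exactly one of the
`n + 1` choices of `p`, and the number of permutations with `k` cycles satisfies the recurrence
`c (n + 1) k = n * c n k + c n (k - 1)` of the unsigned Stirling numbers of the first kind.
Splitting on the value of the last Bernoulli variable, `n! * P(B₁ + ⋯ + Bₙ = k)` satisfies the
same recurrence.
-/

open Finset

namespace Equiv.Perm

variable {α β : Type*}

def IsCycleMin [LE α] (σ : Perm α) (a : α) : Prop :=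
  ∀ b, σ.SameCycle a b → a ≤ b

theorem SameCycle.map {σ : Perm α} {τ : Perm β} {g : α → β}
    (hg : ∀ x, τ.SameCycle (g x) (g (σ x))) {x y : α} (h : σ.SameCycle x y) :
    τ.SameCycle (g x) (g y) := by
  have step (j : ℤ) : τ.SameCycle (g ((σ ^ j) x)) (g ((σ ^ (j + 1)) x)) := by
    rw [add_comm, zpow_add, zpow_one, mul_apply]
    exact hg _
  obtain ⟨i, rfl⟩ := h
  induction i using Int.induction_on with
  | zero => exact .refl _ _
  | succ i ih => exact ih.trans (step i)
  | pred i ih => exact ih.trans (by simpa using (step (-(i : ℤ) - 1)).symm)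

theorem isCycleMin_iff_forall_iterate [LE α] [Finite α] {σ : Perm α} {a : α} :
    σ.IsCycleMin a ↔ ∀ m : ℕ, a ≤ σ^[m] a := by
  refine ⟨fun h m => h _ ⟨m, by simp [iterate_eq_pow]⟩, fun h b hb => ?_⟩
  obtain ⟨m, -, rfl⟩ := hb.exists_pow_eq'
  simpa [iterate_eq_pow] using h m

open scoped Classical in
theorem card_filter_isCycleMin_sameCycle [LinearOrder α] [Fintype α] (σ : Perm α) (x : α) :
    #{a | σ.IsCycleMin a ∧ σ.SameCycle x a} = 1 := by
  set c := univ.filter (σ.SameCycle x)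
  have hc : c.Nonempty := ⟨x, mem_filter.2 ⟨mem_univ _, .refl _ _⟩⟩
  set m := c.min' hc
  have hxm : σ.SameCycle x m := (mem_filter.1 (c.min'_mem hc)).2
  have hm : σ.IsCycleMin m := fun b hb => c.min'_le b (mem_filter.2 ⟨mem_univ _, hxm.trans hb⟩)
  refine card_eq_one.2 ⟨m, eq_singleton_iff_unique_mem.2 ⟨mem_filter.2 ⟨mem_univ _, hm, hxm⟩, ?_⟩⟩
  intro a ha
  obtain ⟨ha, hxa⟩ := (mem_filter.1 ha).2
  have hma := hxm.symm.trans hxa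
  exact le_antisymm (ha m hma.symm) (hm a hma)

section decomposeFin

variable {n : ℕ} (p : Fin (n + 1)) (e : Perm (Fin n))

theorem decomposeFin_symm_sameCycle_succ_apply (i : Fin n) :
    (decomposeFin.symm (p, e)).SameCycle i.succ (e i).succ := by
  set π := decomposeFin.symm (p, e)
  have hπ : π i.succ = swap 0 p (e i).succ := decomposeFin_symm_apply_succ e p i
  by_cases hp : (e i).succ = p
  · have : π (π i.succ) = (e i).succ := by
      rw [hπ, hp, swap_apply_right, decomposeFin_symm_apply_zero]
    rw [← this]
    exact sameCycle_apply_right.2 (sameCycle_apply_right.2 .rfl)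
  · rw [swap_apply_of_ne_of_ne (Fin.succ_ne_zero _) hp] at hπ
    rw [← hπ]
    exact sameCycle_apply_right.2 .rfl

theorem decomposeFin_symm_sameCycle_succ_iff (i j : Fin n) :
    (decomposeFin.symm (p, e)).SameCycle i.succ j.succ ↔ e.SameCycle i j := by
  refine ⟨fun h => ?_, SameCycle.map (decomposeFin_symm_sameCycle_succ_apply p e)⟩
  obtain ⟨d, hd⟩ : ∃ d : Fin n, ∀ q, p = q.succ → d = q := by
    cases p using Fin.cases with
    | zero => exact ⟨i, fun q h => absurd h.symm (Fin.succ_ne_zero q)⟩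
    | succ q => exact ⟨q, fun q' h => Fin.succ_injective _ h⟩
  -- `φ` contracts `0` onto `q` when `p = q.succ`, turning each step of
  -- `decomposeFin.symm (p, e)` into at most one step of `e`.
  let φ : Fin (n + 1) → Fin n := Fin.cases d id
  have hφ (x : Fin (n + 1)) : e.SameCycle (φ x) (φ (decomposeFin.symm (p, e) x)) := by
    cases x using Fin.cases with
    | zero =>
      rw [decomposeFin_symm_apply_zero]
      cases p using Fin.cases with
      | zero => exact .rfl
      | succ q => simp [φ, hd q rfl, SameCycle.refl]
    | succ i =>
      rw [decomposeFin_symm_apply_succ]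
      by_cases hp : (e i).succ = p
      · simp [φ, hp, hd (e i) hp.symm, SameCycle.refl]
      · simp [φ, swap_apply_of_ne_of_ne (Fin.succ_ne_zero _) hp, SameCycle.refl]
  simpa [φ] using h.map hφ

theorem decomposeFin_symm_zero_not_sameCycle_zero_succ (i : Fin n) :
    ¬ (decomposeFin.symm (0, e)).SameCycle 0 i.succ := fun h =>
  Fin.succ_ne_zero i (h.eq_of_left (decomposeFin_symm_apply_zero 0 e)).symm

theorem decomposeFin_symm_succ_sameCycle_zero_succ_iff (q i : Fin n) :
    (decomposeFin.symm (q.succ, e)).SameCycle 0 i.succ ↔ e.SameCycle q i := by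
  rw [← sameCycle_apply_left, decomposeFin_symm_apply_zero, decomposeFin_symm_sameCycle_succ_iff]

theorem isCycleMin_decomposeFin_symm_succ_iff (i : Fin n) :
    (decomposeFin.symm (p, e)).IsCycleMin i.succ ↔
      e.IsCycleMin i ∧ ¬ (decomposeFin.symm (p, e)).SameCycle 0 i.succ := by
  constructor
  · intro h
    refine ⟨fun j hj => ?_, fun h0 => Fin.succ_ne_zero i (Fin.le_zero_iff.1 (h 0 h0.symm))⟩
    exact Fin.succ_le_succ_iff.1 (h _ ((decomposeFin_symm_sameCycle_succ_iff p e i j).2 hj))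
  · rintro ⟨hi, h0⟩ b hb
    cases b using Fin.cases with
    | zero => exact absurd hb.symm h0
    | succ j =>
      exact Fin.succ_le_succ_iff.2 (hi j ((decomposeFin_symm_sameCycle_succ_iff p e i j).1 hb))

end decomposeFin

end Equiv.Perm

open Equiv.Perm

section Counting

open scoped Classical

theorem numCycles_eq_card_isCycleMin {n : ℕ} (π : Equiv.Perm (Fin n)) :
    numCycles π = #{a | π.IsCycleMin a} := by
  simp only [numCycles, ← isCycleMin_iff_forall_iterate]
  rw [Nat.card_eq_fintype_card, Fintype.card_subtype]

section decomposeFin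

variable {n : ℕ} (e : Equiv.Perm (Fin n))

theorem numCycles_decomposeFin_symm (p : Fin (n + 1)) :
    numCycles (decomposeFin.symm (p, e)) =
      #{i | e.IsCycleMin i ∧ ¬ (decomposeFin.symm (p, e)).SameCycle 0 i.succ} + 1 := by
  have h0 : (decomposeFin.symm (p, e)).IsCycleMin 0 := fun b _ => Fin.zero_le b
  rw [numCycles_eq_card_isCycleMin, card_filter, Fin.sum_univ_succ, if_pos h0, card_filter]
  simp only [isCycleMin_decomposeFin_symm_succ_iff]
  ring

theorem numCycles_decomposeFin_symm_zero :
    numCycles (decomposeFin.symm (0, e)) = numCycles e + 1 := by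
  rw [numCycles_decomposeFin_symm, numCycles_eq_card_isCycleMin e]
  simp only [decomposeFin_symm_zero_not_sameCycle_zero_succ, not_false_eq_true, and_true]

theorem numCycles_decomposeFin_symm_succ (q : Fin n) :
    numCycles (decomposeFin.symm (q.succ, e)) = numCycles e := by
  have := card_filter_add_card_filter_not (s := {a | e.IsCycleMin a}) (e.SameCycle q)
  rw [filter_filter, filter_filter, card_filter_isCycleMin_sameCycle] at this
  rw [numCycles_decomposeFin_symm, numCycles_eq_card_isCycleMin e]
  simp only [decomposeFin_symm_succ_sameCycle_zero_succ_iff]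
  omega

end decomposeFin

theorem card_numCycles_eq_stirlingFirst (n k : ℕ) :
    #{π : Equiv.Perm (Fin n) | numCycles π = k} = n.stirlingFirst k := by
  induction n generalizing k with
  | zero =>
    have h (π : Equiv.Perm (Fin 0)) : numCycles π = 0 := by simp [numCycles_eq_card_isCycleMin]
    cases k <;> simp [h]
  | succ n ih =>
    rw [card_filter, ← decomposeFin.symm.sum_comp, Fintype.sum_prod_type, Fin.sum_univ_succ]
    simp only [numCycles_decomposeFin_symm_zero, numCycles_decomposeFin_symm_succ, ← card_filter,
      ih, sum_const, card_univ, Fintype.card_fin, smul_eq_mul]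
    cases k with
    | zero => cases n <;> simp
    | succ k => simp [ih, Nat.stirlingFirst_succ_succ, add_comm]

end Counting

section Probability

variable {Ω : Type*} [MeasurableSpace Ω] {μ : Measure Ω} {X Y : Ω → ℕ}

theorem ProbabilityTheory.IndepFun.measure_add_eq_zero (hXY : IndepFun X Y μ) :
    μ {ω | X ω + Y ω = 0} = μ {ω | X ω = 0} * μ {ω | Y ω = 0} := by
  have : {ω | X ω + Y ω = 0} = X ⁻¹' {0} ∩ Y ⁻¹' {0} := by ext; simp
  rw [this, hXY.measure_inter_preimage_eq_mul _ _ (measurableSet_singleton 0)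
    (measurableSet_singleton 0)]
  rfl

theorem ProbabilityTheory.IndepFun.measure_add_eq_succ (hXY : IndepFun X Y μ)
    (hX : Measurable X) (hY : Measurable Y) (hX₁ : ∀ ω, X ω ≤ 1) (k : ℕ) :
    μ {ω | X ω + Y ω = k + 1} =
      μ {ω | X ω = 1} * μ {ω | Y ω = k} + μ {ω | X ω = 0} * μ {ω | Y ω = k + 1} := by
  have : {ω | X ω + Y ω = k + 1} = X ⁻¹' {1} ∩ Y ⁻¹' {k} ∪ X ⁻¹' {0} ∩ Y ⁻¹' {k + 1} := by
    ext ω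
    have := hX₁ ω
    simp only [Set.mem_ofPred_eq, Set.mem_union, Set.mem_inter_iff, Set.mem_preimage,
      Set.mem_singleton_iff]
    omega
  have h₀ := (hX (measurableSet_singleton 0)).inter (hY (measurableSet_singleton (k + 1)))
  rw [this, measure_union _ h₀,
    hXY.measure_inter_preimage_eq_mul _ _ (measurableSet_singleton _) (measurableSet_singleton _),
    hXY.measure_inter_preimage_eq_mul _ _ (measurableSet_singleton _) (measurableSet_singleton _)]
  · rfl
  · exact Set.disjoint_left.2 fun ω h₁ h₀ => by simp_all

theorem measure_eq_zero_add_measure_eq_one [IsProbabilityMeasure μ] (hX : Measurable X)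
    (hX₁ : ∀ ω, X ω ≤ 1) : μ {ω | X ω = 0} + μ {ω | X ω = 1} = 1 := by
  have : {ω | X ω = 0} ∪ {ω | X ω = 1} = Set.univ := by
    ext ω
    have := hX₁ ω
    simp only [Set.mem_union, Set.mem_ofPred_eq, Set.mem_univ, iff_true]
    omega
  have h₁ : MeasurableSet {ω | X ω = 1} := hX (measurableSet_singleton 1)
  rw [← measure_union _ h₁, this, measure_univ]
  exact Set.disjoint_left.2 fun ω h₀ h₁ => by simp_all

theorem measure_sum_eq_stirlingFirst [IsProbabilityMeasure μ] {n : ℕ} {B : Fin n → Ω → ℕ}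
    (hmeas : ∀ i, Measurable (B i)) (hind : iIndepFun B μ) (hval : ∀ i ω, B i ω ≤ 1)
    (hp : ∀ i : Fin n, μ {ω | B i ω = 1} = (((i : ℕ) : ℝ≥0∞) + 1)⁻¹) (k : ℕ) :
    μ {ω | ∑ i, B i ω = k} = n.stirlingFirst k / n.factorial := by
  induction n generalizing k with
  | zero => cases k <;> simp
  | succ n ih =>
    set X := B (Fin.last n)
    set Y := fun ω => ∑ i : Fin n, B i.castSucc ω
    have hY (j : ℕ) : μ {ω | Y ω = j} = n.stirlingFirst j / n.factorial :=
      ih (fun i => hmeas _) (hind.precomp (Fin.castSucc_injective n)) (fun i => hval _)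
        (fun i => by simpa using hp i.castSucc) j
    have hXY : IndepFun X Y μ := by
      have := hind.indepFun_finsetSum_of_notMem hmeas (s := univ.map Fin.castSuccEmb)
        (i := Fin.last n) (by simp)
      convert this.symm using 1
      ext ω
      simp [Y, Finset.sum_apply]
    have hX₁ : μ {ω | X ω = 1} = ((n : ℝ≥0∞) + 1)⁻¹ := by simpa using hp (Fin.last n)
    have hX₀ : μ {ω | X ω = 0} = n * ((n : ℝ≥0∞) + 1)⁻¹ := by
      have h := measure_eq_zero_add_measure_eq_one (μ := μ) (hmeas (Fin.last n)) (hval _)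
      rw [hX₁] at h
      refine (ENNReal.add_left_inj (by simp)).1 (h.trans ?_)
      rw [← add_one_mul, ENNReal.mul_inv_cancel (by simp) (by simp)]
    have hfact :
        ((n + 1).factorial : ℝ≥0∞)⁻¹ = ((n : ℝ≥0∞) + 1)⁻¹ * (n.factorial : ℝ≥0∞)⁻¹ := by
      rw [Nat.factorial_succ, Nat.cast_mul, ENNReal.mul_inv (by simp) (by simp)]
      simp
    have hsum (ω : Ω) : ∑ i, B i ω = X ω + Y ω := by
      rw [Fin.sum_univ_castSucc, add_comm]
    simp only [hsum, ENNReal.div_eq_inv_mul, hfact]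
    cases k with
    | zero =>
      rw [hXY.measure_add_eq_zero, hX₀, hY, ENNReal.div_eq_inv_mul]
      cases n <;> simp
    | succ k =>
      rw [hXY.measure_add_eq_succ (hmeas _) (Finset.measurable_sum _ fun i _ => hmeas _) (hval _),
        hX₁, hX₀, hY, hY, Nat.stirlingFirst_succ_succ]
      simp only [ENNReal.div_eq_inv_mul]
      push_cast
      ring

end Probability

/-- The number of cycles of a uniformly random permutation of `[n]` has the same
distribution as `B_1 + ⋯ + B_n`, where the `B_i` are independent Bernoulli
variables with `P(B_i = 1) = 1/i` (here `i : Fin n` corresponds to `i+1`). -/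
theorem numCycles_eq_sum_bernoulli (n : ℕ)
    {Ω : Type*} [MeasurableSpace Ω] (μ : Measure Ω) [IsProbabilityMeasure μ]
    (B : Fin n → Ω → ℕ) (hmeas : ∀ i, Measurable (B i))
    (hind : iIndepFun B μ)
    (hval : ∀ i ω, B i ω ≤ 1)
    (hp : ∀ i : Fin n, μ {ω | B i ω = 1} = ENNReal.ofReal (1 / ((i : ℕ) + 1))) :
    ∀ k : ℕ, μ {ω | ∑ i, B i ω = k}
      = (Nat.card {π : Equiv.Perm (Fin n) | numCycles π = k} : ℝ≥0∞) / n.factorial := by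
  intro k
  have hp' (i : Fin n) : μ {ω | B i ω = 1} = (((i : ℕ) : ℝ≥0∞) + 1)⁻¹ := by
    rw [hp, one_div, ENNReal.ofReal_inv_of_pos (by positivity)]
    exact_mod_cast congrArg Inv.inv (ENNReal.ofReal_natCast (i + 1))
  rw [measure_sum_eq_stirlingFirst hmeas hind hval hp' k, Nat.card_eq_card_toFinset,
    Set.toFinset_ofPred, card_numCycles_eq_stirlingFirst]
end

section
/- Fix θ > 0 and n ≥ 1. The function on [0,1]^n given by (u_1,...,u_n) ↦ θ^{K_n(u)} (min(u_1,...,u_n))^{θ−1}, where K_n(u) is the number of lower records in the sequence (u_1,...,u_n), integrates to 1 against Lebesgue measure on [0,1]^n, i.e. it is a probability density. -/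
/-!
Integrate out the last coordinate. If the first `n` coordinates `v ∈ [0,1]^n` have minimum `m`,
the last coordinate `x` is a new lower record exactly when `x < m`, so the integrand factors as
`θ^{K_n(v)} g_m(x)` with `g_m(x) = θ x^{θ-1}` for `x < m` and `g_m(x) = m^{θ-1}` for `x ≥ m`.
Since `∫₀¹ g_m = m^θ + (1 - m) m^{θ-1} = m^{θ-1}`, the integral over `[0,1]^{n+1}` equals the
integral over `[0,1]^n`, and for `n = 1` it is `∫₀¹ θ x^{θ-1} dx = 1`.
-/

open MeasureTheory
open scoped ENNReal

/-- The number of lower records of the finite sequence `u : Fin n → ℝ`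
(index `0` always counts). -/
noncomputable def numRecords {n : ℕ} (u : Fin n → ℝ) : ℕ :=
  Nat.card {i : Fin n // ∀ j, j < i → u i < u j}

open Set

lemma Finite.lt_ciInf_iff {ι α : Type*} [Finite ι] [Nonempty ι] [ConditionallyCompleteLinearOrder α]
    {f : ι → α} {a : α} : a < ⨅ i, f i ↔ ∀ i, a < f i := by
  obtain ⟨i, hi⟩ := exists_eq_ciInf_of_finite (f := f)
  exact ⟨fun h j => h.trans_le (Finite.ciInf_le f j), fun h => hi ▸ h i⟩

lemma Fin.ciInf_snoc {α : Type*} [ConditionallyCompleteLinearOrder α] {n : ℕ} [NeZero n]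
    (v : Fin n → α) (x : α) : ⨅ i, (Fin.snoc v x : Fin (n + 1) → α) i = min (⨅ i, v i) x := by
  apply le_antisymm
  · exact le_min (le_ciInf fun i => by simpa using Finite.ciInf_le (Fin.snoc v x) i.castSucc)
      (by simpa using Finite.ciInf_le (Fin.snoc v x : Fin (n + 1) → α) (Fin.last n))
  · exact le_ciInf <| Fin.lastCases (by simp) fun i => by
      simpa using (min_le_left _ _).trans (Finite.ciInf_le v i)

open Classical in
lemma numRecords_eq_sum {n : ℕ} (u : Fin n → ℝ) :
    numRecords u = ∑ i, if ∀ j < i, u i < u j then 1 else 0 := by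
  rw [numRecords, Nat.card_eq_fintype_card, Fintype.card_subtype, Finset.card_filter]

lemma numRecords_snoc {n : ℕ} (v : Fin n → ℝ) (x : ℝ) :
    numRecords (Fin.snoc v x : Fin (n + 1) → ℝ) = numRecords v + if ∀ i, x < v i then 1 else 0 := by
  classical
  rw [numRecords_eq_sum, numRecords_eq_sum, Fin.sum_univ_castSucc]
  congr 1
  · refine Finset.sum_congr rfl fun i _ => ?_
    simp [Fin.forall_fin_succ', (Fin.castSucc_lt_last i).not_gt]
  · simp [Fin.forall_fin_succ', Fin.castSucc_lt_last]

lemma measurable_numRecords {n : ℕ} : Measurable (numRecords : (Fin n → ℝ) → ℕ) := by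
  classical
  rw [show (numRecords : (Fin n → ℝ) → ℕ) = _ from funext numRecords_eq_sum]
  refine Finset.measurable_sum _ fun i _ => Measurable.ite ?_ measurable_const measurable_const
  simp only [Set.ofPred_forall]
  exact .iInter fun j => .iInter fun _ =>
    measurableSet_lt (measurable_pi_apply i) (measurable_pi_apply j)

noncomputable def ewensDensity (θ : ℝ) {n : ℕ} (u : Fin n → ℝ) : ℝ :=
  θ ^ numRecords u * (⨅ i, u i) ^ (θ - 1)

lemma measurable_ewensDensity (θ : ℝ) {n : ℕ} : Measurable (ewensDensity θ : (Fin n → ℝ) → ℝ) :=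
  (measurable_const.pow measurable_numRecords).mul
    ((Measurable.iInf fun i => measurable_pi_apply i).pow_const _)

lemma ewensDensity_nonneg {θ : ℝ} (hθ : 0 ≤ θ) {n : ℕ} {u : Fin n → ℝ} (hu : ∀ i, 0 ≤ u i) :
    0 ≤ ewensDensity θ u :=
  mul_nonneg (pow_nonneg hθ _) (Real.rpow_nonneg (Real.iInf_nonneg hu) _)

lemma ewensDensity_snoc (θ : ℝ) {n : ℕ} [NeZero n] (v : Fin n → ℝ) (x : ℝ) :
    ewensDensity θ (Fin.snoc v x : Fin (n + 1) → ℝ) =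
      θ ^ numRecords v * ((if x < ⨅ i, v i then θ else 1) * min (⨅ i, v i) x ^ (θ - 1)) := by
  rw [ewensDensity, numRecords_snoc, Fin.ciInf_snoc, pow_add]
  simp only [Finite.lt_ciInf_iff]
  split_ifs <;> ring

lemma lintegral_Ico_mul_rpow_sub_one {θ m : ℝ} (hθ : 0 < θ) (hm : 0 ≤ m) :
    ∫⁻ x in Ico 0 m, ENNReal.ofReal (θ * x ^ (θ - 1)) = ENNReal.ofReal (m ^ θ) := by
  have hint : IntegrableOn (fun x : ℝ => θ * x ^ (θ - 1)) (Ioc 0 m) := by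
    rw [← intervalIntegrable_iff_integrableOn_Ioc_of_le hm]
    exact (intervalIntegral.intervalIntegrable_rpow' (by linarith)).const_mul θ
  have hnonneg : 0 ≤ᵐ[volume.restrict (Ioc 0 m)] fun x : ℝ => θ * x ^ (θ - 1) :=
    (ae_restrict_mem measurableSet_Ioc).mono fun x hx =>
      mul_nonneg hθ.le (Real.rpow_nonneg hx.1.le _)
  rw [Measure.restrict_congr_set Ico_ae_eq_Ioc, ← ofReal_integral_eq_lintegral_ofReal hint hnonneg,
    ← intervalIntegral.integral_of_le hm, intervalIntegral.integral_const_mul,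
    integral_rpow (Or.inl (by linarith)), sub_add_cancel, Real.zero_rpow hθ.ne', sub_zero,
    mul_div_cancel₀ _ hθ.ne']

lemma lintegral_Icc_ite_mul_min_rpow {θ m : ℝ} (hθ : 0 < θ) (hm0 : 0 ≤ m) (hm1 : m ≤ 1) :
    ∫⁻ x in Icc 0 1, ENNReal.ofReal ((if x < m then θ else 1) * min m x ^ (θ - 1)) =
      ENNReal.ofReal (m ^ (θ - 1)) := by
  have hbelow : ∫⁻ x in Ico 0 m, ENNReal.ofReal ((if x < m then θ else 1) * min m x ^ (θ - 1)) =
      ENNReal.ofReal (m ^ θ) := by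
    rw [setLIntegral_congr_fun measurableSet_Ico fun x hx => by
      rw [if_pos hx.2, min_eq_right hx.2.le]]
    exact lintegral_Ico_mul_rpow_sub_one hθ hm0
  have habove : ∫⁻ x in Icc m 1, ENNReal.ofReal ((if x < m then θ else 1) * min m x ^ (θ - 1)) =
      ENNReal.ofReal (m ^ (θ - 1) * (1 - m)) := by
    rw [setLIntegral_congr_fun measurableSet_Icc fun x hx => by
      rw [if_neg hx.1.not_gt, min_eq_left hx.1, one_mul], setLIntegral_const, Real.volume_Icc,
      ← ENNReal.ofReal_mul (Real.rpow_nonneg hm0 _)]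
  have hpow : m ^ θ = m ^ (θ - 1) * m := by
    rw [← Real.rpow_add_one' hm0 (by linarith), sub_add_cancel]
  rw [← Ico_union_Icc_eq_Icc hm0 hm1,
    lintegral_union measurableSet_Icc (Set.disjoint_left.2 fun x hx hx' => hx.2.not_ge hx'.1),
    hbelow, habove, ← ENNReal.ofReal_add (by positivity)
      (mul_nonneg (Real.rpow_nonneg hm0 _) (by linarith)), hpow]
  ring_nf

noncomputable abbrev unitCubeMeasure (n : ℕ) : Measure (Fin n → ℝ) :=
  Measure.pi fun _ => volume.restrict (Icc 0 1)

lemma ae_mem_unitCube (n : ℕ) : ∀ᵐ u ∂unitCubeMeasure n, ∀ i, u i ∈ Icc (0 : ℝ) 1 :=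
  Filter.eventually_all.2 fun _ =>
    Measure.tendsto_eval_ae_ae.eventually (ae_restrict_mem measurableSet_Icc)

lemma lintegral_unitCubeMeasure_succ {n : ℕ} {f : (Fin (n + 1) → ℝ) → ℝ≥0∞} (hf : Measurable f) :
    ∫⁻ u, f u ∂unitCubeMeasure (n + 1) =
      ∫⁻ v, (∫⁻ x in Icc (0 : ℝ) 1, f (Fin.snoc v x)) ∂unitCubeMeasure n := by
  set e := MeasurableEquiv.piFinSuccAbove (fun _ : Fin (n + 1) => ℝ) (Fin.last n)
  have he (x : ℝ) (v : Fin n → ℝ) : e.symm (x, v) = Fin.snoc v x := by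
    simp [e, MeasurableEquiv.piFinSuccAbove_symm_apply, Fin.snocEquiv]
  rw [← (measurePreserving_piFinSuccAbove (fun _ => volume.restrict (Icc (0 : ℝ) 1))
    (Fin.last n)).symm.lintegral_comp hf,
    lintegral_prod_symm (fun p => f (e.symm p)) (hf.comp e.symm.measurable).aemeasurable]
  simp only [he]

-- The induction starts at `n = 1`: for `n = 0` the junk value `⨅ i : Fin 0, u i = 0` would break
-- `ewensDensity_snoc`.
lemma lintegral_ewensDensity_one {θ : ℝ} (hθ : 0 < θ) :
    ∫⁻ u, ENNReal.ofReal (ewensDensity θ u) ∂unitCubeMeasure 1 = 1 := by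
  have hdens (v : Fin 0 → ℝ) (x : ℝ) :
      ewensDensity θ (Fin.snoc v x : Fin 1 → ℝ) = θ * x ^ (θ - 1) := by
    simp [ewensDensity, Fin.snoc_zero, numRecords_eq_sum]
  rw [lintegral_unitCubeMeasure_succ (measurable_ewensDensity θ).ennreal_ofReal, unitCubeMeasure,
    Measure.pi_of_empty, lintegral_dirac]
  simp only [hdens]
  rw [Measure.restrict_congr_set Ico_ae_eq_Icc.symm, lintegral_Ico_mul_rpow_sub_one hθ zero_le_one,
    Real.one_rpow, ENNReal.ofReal_one]

lemma lintegral_ewensDensity_succ {θ : ℝ} (hθ : 0 < θ) {n : ℕ} [NeZero n] :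
    ∫⁻ u, ENNReal.ofReal (ewensDensity θ u) ∂unitCubeMeasure (n + 1) =
      ∫⁻ v, ENNReal.ofReal (ewensDensity θ v) ∂unitCubeMeasure n := by
  rw [lintegral_unitCubeMeasure_succ (measurable_ewensDensity θ).ennreal_ofReal]
  refine lintegral_congr_ae ((ae_mem_unitCube n).mono fun v hv => ?_)
  have hm0 : 0 ≤ ⨅ i, v i := Real.iInf_nonneg fun i => (hv i).1
  have hm1 : ⨅ i, v i ≤ 1 := (Finite.ciInf_le v 0).trans (hv 0).2
  simp only [ewensDensity_snoc, ENNReal.ofReal_mul (pow_nonneg hθ.le _)]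
  rw [lintegral_const_mul' _ _ ENNReal.ofReal_ne_top, lintegral_Icc_ite_mul_min_rpow hθ hm0 hm1,
    ← ENNReal.ofReal_mul (pow_nonneg hθ.le _), ewensDensity]

lemma lintegral_ewensDensity {θ : ℝ} (hθ : 0 < θ) {n : ℕ} (hn : 0 < n) :
    ∫⁻ u, ENNReal.ofReal (ewensDensity θ u) ∂unitCubeMeasure n = 1 := by
  induction n, hn using Nat.le_induction with
  | base => exact lintegral_ewensDensity_one hθ
  | succ n hn ih =>
    have : NeZero n := NeZero.of_pos hn
    rw [lintegral_ewensDensity_succ hθ, ih]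

/-- For `θ > 0` and `n ≥ 1`, the function
`u ↦ θ^{K_n(u)} (min_i u_i)^{θ-1}`, where `K_n(u)` is the number of lower records,
integrates to `1` over the cube `[0,1]^n`; i.e. it is a probability density. -/
theorem ewens_density_integral (n : ℕ) (hn : 0 < n) (θ : ℝ) (hθ : 0 < θ) :
    ∫ u in Set.univ.pi (fun _ : Fin n => Set.Icc (0 : ℝ) 1),
      θ ^ numRecords u * (⨅ i, u i) ^ (θ - 1) = 1 := by
  rw [volume_pi, Measure.restrict_pi_pi]
  change ∫ u, ewensDensity θ u ∂unitCubeMeasure n = 1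
  rw [integral_eq_lintegral_of_nonneg_ae
      ((ae_mem_unitCube n).mono fun u hu => ewensDensity_nonneg hθ.le fun i => (hu i).1)
      (measurable_ewensDensity θ).aestronglyMeasurable,
    lintegral_ewensDensity hθ hn, ENNReal.toReal_one]
end

section
/- Let θ > 0 and let (U_1,...,U_n) have density θ^{K_n(u)} min(u_1,...,u_n)^{θ−1} on [0,1]^n. Then the relative order of (U_1,...,U_n) is independent of its order statistics, and conditionally on the lower record indicators, all relative orders compatible with those indicators are equally likely. -/
open MeasureTheory ProbabilityTheory
open scoped ENNReal Classical

/-- The law on `[0,1]^n` with density `θ^{K_n(u)} (min_i u_i)^{θ-1}` with respect to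
Lebesgue measure, where `K_n(u)` is the number of lower records. -/
noncomputable def ewensLaw (n : ℕ) (θ : ℝ) : Measure (Fin n → ℝ) :=
  (volume.restrict (Set.univ.pi fun _ : Fin n => Set.Icc (0 : ℝ) 1)).withDensity
    fun u => ENNReal.ofReal (θ ^ numRecords u * (⨅ i, u i) ^ (θ - 1))

/-- If the relative order of the sample is `σ` (i.e. `U_{σ(1)} < ⋯ < U_{σ(n)}`), then
position `i` is a lower record of the sequence iff `σ⁻¹ i < σ⁻¹ j` for all `j < i`. -/
def recordPatternOf {n : ℕ} (σ : Equiv.Perm (Fin n)) (i : Fin n) : Prop :=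
  ∀ j, j < i → σ.symm i < σ.symm j

/-!
On the region where `u` has relative order `σ` (i.e. `u ∘ σ` is increasing), the record count
`K_n(u)` depends only on `σ`, while `min u` is a symmetric function of `u`. Hence the density
factors as `θ ^ K(σ)` times a function of the order statistics `u ∘ σ`, and invariance of
Lebesgue measure under permuting coordinates gives
`P(relative order σ, order statistics ∈ E) = θ ^ K(σ) * I(E)`.
Ties are Lebesgue-null, so summing over `σ` normalizes this product form, which is exactly
independence; and `P(relative order σ) = θ ^ K(σ) * I(univ)` sees `σ` only through its records.
-/

lemma volume_measurePreserving_comp_perm {ι : Type*} [Fintype ι] (σ : Equiv.Perm ι) :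
    MeasurePreserving (fun u : ι → ℝ => u ∘ σ) volume volume := by
  convert volume_measurePreserving_piCongrLeft (fun _ : ι => ℝ) σ.symm
  ext u
  simp [MeasurableEquiv.piCongrLeft, Equiv.piCongrLeft_apply]

lemma preimage_comp_perm_univ_pi {ι α : Type*} (σ : Equiv.Perm ι) (s : Set α) :
    (fun u : ι → α => u ∘ σ) ⁻¹' Set.univ.pi (fun _ => s) = Set.univ.pi fun _ => s := by
  ext u
  simpa using σ.forall_congr_right (q := fun i => u i ∈ s)

lemma volume_setOf_apply_eq_apply {ι : Type*} [Fintype ι] {i j : ι} (hij : i ≠ j) :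
    volume {u : ι → ℝ | u i = u j} = 0 := by
  let L : (ι → ℝ) →ₗ[ℝ] ℝ := (LinearMap.proj i : (ι → ℝ) →ₗ[ℝ] ℝ) - LinearMap.proj j
  have hker : {u : ι → ℝ | u i = u j} = LinearMap.ker L := by
    ext u; simp [L, sub_eq_zero]
  have hL : LinearMap.ker L ≠ ⊤ := fun htop => by
    simpa [L, Pi.single_eq_of_ne hij.symm] using
      (LinearMap.mem_ker.1 (htop ▸ Submodule.mem_top : Pi.single i 1 ∈ LinearMap.ker L))
  rw [hker]
  exact Measure.addHaar_submodule volume _ hL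

section RelativeOrder

variable {n : ℕ}

-- When `StrictMono (u ∘ σ)`, the tuple `u ∘ σ` lists the order statistics of `u`.
def relOrderSet (σ : Equiv.Perm (Fin n)) (E : Set (Fin n → ℝ)) : Set (Fin n → ℝ) :=
  {u | StrictMono (u ∘ σ) ∧ u ∘ σ ∈ E}

lemma measurableSet_setOf_strictMono : MeasurableSet {v : Fin n → ℝ | StrictMono v} :=
  measurableSet_setOfPred.2 <| Measurable.forall fun i => Measurable.forall fun j =>
    measurable_const.imp <| measurableSet_setOfPred.1 <|
      measurableSet_lt (measurable_pi_apply i) (measurable_pi_apply j)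

lemma measurableSet_relOrderSet (σ : Equiv.Perm (Fin n)) {E : Set (Fin n → ℝ)}
    (hE : MeasurableSet E) : MeasurableSet (relOrderSet σ E) :=
  (volume_measurePreserving_comp_perm σ).measurable (measurableSet_setOf_strictMono.inter hE)

lemma eq_of_strictMono_comp {u : Fin n → ℝ} {σ τ : Equiv.Perm (Fin n)}
    (hσ : StrictMono (u ∘ σ)) (hτ : StrictMono (u ∘ τ)) : σ = τ := by
  have eq_sort : ∀ ρ : Equiv.Perm (Fin n), StrictMono (u ∘ ρ) → ρ = Tuple.sort u :=
    fun ρ hρ => Tuple.eq_sort_iff.2 ⟨hρ.monotone, fun i j hij h => absurd h (hρ hij).ne⟩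
  rw [eq_sort σ hσ, eq_sort τ hτ]

lemma disjoint_relOrderSet {σ τ : Equiv.Perm (Fin n)} (h : σ ≠ τ) (E F : Set (Fin n → ℝ)) :
    Disjoint (relOrderSet σ E) (relOrderSet τ F) :=
  Set.disjoint_left.2 fun _ hσ hτ => h (eq_of_strictMono_comp hσ.1 hτ.1)

lemma exists_strictMono_comp_perm {u : Fin n → ℝ} (hu : Function.Injective u) :
    ∃ σ : Equiv.Perm (Fin n), StrictMono (u ∘ σ) :=
  ⟨Tuple.sort u, (Tuple.monotone_sort u).strictMono_of_injective
    (hu.comp (Tuple.sort u).injective)⟩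

lemma lt_iff_symm_lt_of_strictMono_comp {u : Fin n → ℝ} {σ : Equiv.Perm (Fin n)}
    (h : StrictMono (u ∘ σ)) (x y : Fin n) : u x < u y ↔ σ.symm x < σ.symm y := by
  simpa using h.lt_iff_lt (a := σ.symm x) (b := σ.symm y)

lemma numRecords_of_strictMono_comp {u : Fin n → ℝ} {σ : Equiv.Perm (Fin n)}
    (h : StrictMono (u ∘ σ)) : numRecords u = Nat.card {i // recordPatternOf σ i} :=
  Nat.card_congr <| Equiv.subtypeEquivRight fun i =>
    forall₂_congr fun j _ => lt_iff_symm_lt_of_strictMono_comp h i j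

lemma volume_compl_iUnion_relOrderSet :
    volume (⋃ σ : Equiv.Perm (Fin n), relOrderSet σ Set.univ)ᶜ = 0 := by
  refine measure_mono_null (t := ⋃ (i : Fin n) (j : Fin n) (_ : i ≠ j), {u | u i = u j})
    (fun u hu => ?_) (measure_iUnion_null fun i => measure_iUnion_null fun j =>
      measure_iUnion_null fun hij => volume_setOf_apply_eq_apply hij)
  by_contra hinj
  simp only [Set.mem_iUnion, Set.mem_ofPred_eq, not_exists] at hinj
  obtain ⟨σ, hσ⟩ := exists_strictMono_comp_perm fun i j h => not_not.1 fun hij => hinj i j hij h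
  exact hu (Set.mem_iUnion.2 ⟨σ, hσ, trivial⟩)

lemma measure_relOrderSet_eq_mul {P : Measure (Fin n → ℝ)} [IsProbabilityMeasure P]
    (hnull : P (⋃ σ, relOrderSet σ Set.univ)ᶜ = 0) (c : Equiv.Perm (Fin n) → ℝ≥0∞)
    (I : Set (Fin n → ℝ) → ℝ≥0∞)
    (hfac : ∀ σ E, MeasurableSet E → P (relOrderSet σ E) = c σ * I E)
    (σ : Equiv.Perm (Fin n)) {E : Set (Fin n → ℝ)} (hE : MeasurableSet E) :
    P (relOrderSet σ E) = P (relOrderSet σ Set.univ) * P (⋃ τ, relOrderSet τ E) := by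
  have hunion : ∀ E, MeasurableSet E → P (⋃ τ, relOrderSet τ E) = (∑' τ, c τ) * I E := by
    intro E hE
    rw [measure_iUnion (fun σ τ h => disjoint_relOrderSet h E E)
      (fun τ => measurableSet_relOrderSet τ hE), ← ENNReal.tsum_mul_right]
    exact tsum_congr fun τ => hfac τ E hE
  have htotal : (∑' τ, c τ) * I Set.univ = 1 := by
    rw [← hunion _ .univ]
    exact (prob_compl_eq_zero_iff (.iUnion fun τ => measurableSet_relOrderSet τ .univ)).1 hnull
  calc P (relOrderSet σ E) = c σ * I E * ((∑' τ, c τ) * I Set.univ) := by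
        rw [htotal, mul_one, hfac σ E hE]
    _ = c σ * I Set.univ * ((∑' τ, c τ) * I E) := by ring
    _ = _ := by rw [hfac σ _ .univ, hunion E hE]

end RelativeOrder

section EwensLaw

variable {n : ℕ} (θ : ℝ)

lemma ewensLaw_absolutelyContinuous : ewensLaw n θ ≪ volume :=
  (withDensity_absolutelyContinuous _ _).trans Measure.restrict_le_self.absolutelyContinuous

lemma ewensLaw_relOrderSet (σ : Equiv.Perm (Fin n)) {E : Set (Fin n → ℝ)}
    (hE : MeasurableSet E) :
    ewensLaw n θ (relOrderSet σ E) =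
      ENNReal.ofReal (θ ^ Nat.card {i // recordPatternOf σ i}) *
        ∫⁻ v in {v | StrictMono v} ∩ E ∩ Set.univ.pi (fun _ => Set.Icc 0 1),
          ENNReal.ofReal ((⨅ i, v i) ^ (θ - 1)) := by
  set cube : Set (Fin n → ℝ) := Set.univ.pi fun _ => Set.Icc 0 1
  set g : (Fin n → ℝ) → ℝ≥0∞ := fun v => ENNReal.ofReal ((⨅ i, v i) ^ (θ - 1))
  have hg : Measurable g := ENNReal.measurable_ofReal.comp
    ((Measurable.iInf fun i => measurable_pi_apply i).pow measurable_const)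
  have hS := measurableSet_relOrderSet σ hE
  have hcube : MeasurableSet cube := .univ_pi fun _ => measurableSet_Icc
  rw [ewensLaw, withDensity_apply _ hS, Measure.restrict_restrict hS]
  calc _ = ∫⁻ u in relOrderSet σ E ∩ cube,
          ENNReal.ofReal (θ ^ Nat.card {i // recordPatternOf σ i}) * g u := by
        refine setLIntegral_congr_fun (hS.inter hcube) fun u hu => ?_
        have hmin : 0 ≤ ⨅ i, u i := Real.iInf_nonneg fun i => (hu.2 i trivial).1
        rw [numRecords_of_strictMono_comp hu.1.1, ENNReal.ofReal_mul' (Real.rpow_nonneg hmin _)]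
    _ = ENNReal.ofReal (θ ^ Nat.card {i // recordPatternOf σ i}) *
          ∫⁻ u in (· ∘ σ) ⁻¹' ({v | StrictMono v} ∩ E ∩ cube), g (u ∘ σ) := by
        rw [lintegral_const_mul _ hg, Set.preimage_inter, preimage_comp_perm_univ_pi]
        simp only [g, Function.comp_apply, σ.iInf_comp]
        rfl
    _ = _ := by
        rw [(volume_measurePreserving_comp_perm σ).setLIntegral_comp_preimage
          ((measurableSet_setOf_strictMono.inter hE).inter hcube) hg]

end EwensLaw

theorem relOrder_indep_orderStats_ewensLaw_general (n : ℕ) (θ : ℝ)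
    {Ω : Type*} [MeasurableSpace Ω] (μ : Measure Ω) [IsProbabilityMeasure μ]
    (U : Fin n → Ω → ℝ) (hmeas : ∀ i, Measurable (U i))
    (hjoint : Measure.map (fun ω i => U i ω) μ = ewensLaw n θ) :
    (∀ (σ : Equiv.Perm (Fin n)) (E : Set (Fin n → ℝ)), MeasurableSet E →
      μ {ω | (∀ i j : Fin n, i < j → U (σ i) ω < U (σ j) ω) ∧
              (fun i => U (σ i) ω) ∈ E}
        = μ {ω | ∀ i j : Fin n, i < j → U (σ i) ω < U (σ j) ω} *
          μ {ω | ∃ τ : Equiv.Perm (Fin n),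
              (∀ i j : Fin n, i < j → U (τ i) ω < U (τ j) ω) ∧
              (fun i => U (τ i) ω) ∈ E}) ∧
    (∀ σ σ' : Equiv.Perm (Fin n),
      (∀ i, recordPatternOf σ i ↔ recordPatternOf σ' i) →
      μ {ω | ∀ i j : Fin n, i < j → U (σ i) ω < U (σ j) ω}
        = μ {ω | ∀ i j : Fin n, i < j → U (σ' i) ω < U (σ' j) ω}) := by
  set X : Ω → Fin n → ℝ := fun ω i => U i ω
  have hX : Measurable X := measurable_pi_lambda _ hmeas
  have hlaw : ∀ S, MeasurableSet S → μ (X ⁻¹' S) = ewensLaw n θ S := fun S hS => by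
    rw [← hjoint, Measure.map_apply hX hS]
  have : IsProbabilityMeasure (ewensLaw n θ) :=
    hjoint ▸ Measure.isProbabilityMeasure_map hX.aemeasurable
  have hordered : ∀ σ, {ω | ∀ i j : Fin n, i < j → U (σ i) ω < U (σ j) ω} =
      X ⁻¹' relOrderSet σ Set.univ :=
    fun σ => Set.ext fun _ => ⟨fun h => ⟨h, trivial⟩, And.left⟩
  refine ⟨fun σ E hE => ?_, fun σ σ' hpattern => ?_⟩
  · have hsome : {ω | ∃ τ : Equiv.Perm (Fin n), (∀ i j : Fin n, i < j → U (τ i) ω < U (τ j) ω) ∧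
        (fun i => U (τ i) ω) ∈ E} = X ⁻¹' ⋃ τ, relOrderSet τ E := by
      ext; simp [relOrderSet, X, StrictMono, Function.comp_def]
    change μ (X ⁻¹' relOrderSet σ E) = _
    rw [hordered, hsome, hlaw _ (measurableSet_relOrderSet σ hE),
      hlaw _ (measurableSet_relOrderSet σ .univ),
      hlaw _ (.iUnion fun τ => measurableSet_relOrderSet τ hE)]
    exact measure_relOrderSet_eq_mul
      (ewensLaw_absolutelyContinuous θ volume_compl_iUnion_relOrderSet) _ _
      (fun σ E hE => ewensLaw_relOrderSet θ σ hE) σ hE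
  · rw [hordered, hordered, hlaw _ (measurableSet_relOrderSet σ .univ),
      hlaw _ (measurableSet_relOrderSet σ' .univ), ewensLaw_relOrderSet θ σ .univ,
      ewensLaw_relOrderSet θ σ' .univ, Nat.card_congr (Equiv.subtypeEquivRight hpattern)]

/-- If `(U_1, …, U_n)` has density `θ^{K_n(u)} (min u)^{θ-1}` on `[0,1]^n`, then
(1) the relative order of `(U_1, …, U_n)` is independent of its order statistics, and
(2) conditionally on the lower record indicators, all relative orders compatible with
those indicators are equally likely: two ranking permutations with the same record
pattern have the same probability. -/
theorem relOrder_indep_orderStats_ewensLaw (n : ℕ) (θ : ℝ) (hθ : 0 < θ)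
    {Ω : Type*} [MeasurableSpace Ω] (μ : Measure Ω) [IsProbabilityMeasure μ]
    (U : Fin n → Ω → ℝ) (hmeas : ∀ i, Measurable (U i))
    (hjoint : Measure.map (fun ω i => U i ω) μ = ewensLaw n θ) :
    (∀ (σ : Equiv.Perm (Fin n)) (E : Set (Fin n → ℝ)), MeasurableSet E →
      μ {ω | (∀ i j : Fin n, i < j → U (σ i) ω < U (σ j) ω) ∧
              (fun i => U (σ i) ω) ∈ E}
        = μ {ω | ∀ i j : Fin n, i < j → U (σ i) ω < U (σ j) ω} *
          μ {ω | ∃ τ : Equiv.Perm (Fin n),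
              (∀ i j : Fin n, i < j → U (τ i) ω < U (τ j) ω) ∧
              (fun i => U (τ i) ω) ∈ E}) ∧
    (∀ σ σ' : Equiv.Perm (Fin n),
      (∀ i, recordPatternOf σ i ↔ recordPatternOf σ' i) →
      μ {ω | ∀ i j : Fin n, i < j → U (σ i) ω < U (σ j) ω}
        = μ {ω | ∀ i j : Fin n, i < j → U (σ' i) ω < U (σ' j) ω}) :=
  relOrder_indep_orderStats_ewensLaw_general n θ μ U hmeas hjoint
end

section
/- Let θ > 0, p ∈ (0,1), and let (K_ℓ)_{ℓ≥1} be independent Poisson random variables with means θ(1−p)^ℓ/ℓ. Then N = Σ_{ℓ≥1} ℓ K_ℓ is almost surely finite and has the negative binomial distribution P(N = n) = ((θ)_n / n!) (1−p)^n p^θ for n ≥ 0. -/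
/-!
Write `λ_ℓ = θ (1-p)^ℓ / ℓ`. Since `∑ λ_ℓ = -θ log p`, a cylinder `{K_ℓ = a_ℓ for all ℓ}`
with `a` finitely supported has probability `p^θ ∏ λ_ℓ^{a_ℓ} / a_ℓ!`. The event `N = n` is the
disjoint union of the cylinders whose `a` is the cycle type of a permutation of `n` points, and
for those `∏ λ_ℓ^{a_ℓ} / a_ℓ! = (1-p)^n θ^{#cycles} / ∏ ℓ^{a_ℓ} a_ℓ!`. Summing over cycle types
gives `(θ)_n / n!`: the sums `a_m` over cycle types of `m` points satisfy
`m a_m = θ (a_0 + ⋯ + a_{m-1})`, by removing one cycle of each length `ℓ` in all possible ways.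
Almost sure finiteness is Borel–Cantelli: `P(K_ℓ ≠ 0) = 1 - exp(-λ_ℓ) ≤ λ_ℓ` is summable.
-/

open MeasureTheory ProbabilityTheory
open scoped ENNReal

open Finset Filter Function
open scoped Nat Topology

/-- Cycle types of permutations of `m` points with no cycle longer than `n`: `f i` is the number
of cycles of length `i + 1`. -/
def cycleTypes (n m : ℕ) : Finset (Fin n → ℕ) :=
  (Fintype.piFinset fun _ ↦ range (m + 1)).filter fun f ↦ ∑ i : Fin n, ((i : ℕ) + 1) * f i = m

/-- `θ ^ (number of cycles)` times the proportion of permutations with cycle type `f`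
(Cauchy's formula). -/
noncomputable def cycleWeight (θ : ℝ) {n : ℕ} (f : Fin n → ℕ) : ℝ :=
  ∏ i : Fin n, (θ / ((i : ℕ) + 1)) ^ f i / (f i)!

theorem mul_sum_range_prod_add_div_factorial (θ : ℝ) (m : ℕ) :
    θ * ∑ j ∈ range m, (∏ i ∈ range j, (θ + i)) / j ! = m * ((∏ i ∈ range m, (θ + i)) / m !) := by
  induction m with
  | zero => simp
  | succ m ih =>
    rw [sum_range_succ, mul_add, ih, prod_range_succ, Nat.factorial_succ]
    push_cast
    field_simp
    ring

section CycleTypes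

variable {n m : ℕ} {f : Fin n → ℕ}

theorem succ_mul_le_of_sum_eq (hf : ∑ i : Fin n, ((i : ℕ) + 1) * f i = m) (i : Fin n) :
    ((i : ℕ) + 1) * f i ≤ m :=
  hf ▸ single_le_sum (f := fun i : Fin n ↦ ((i : ℕ) + 1) * f i) (fun _ _ ↦ Nat.zero_le _)
    (mem_univ i)

theorem mem_cycleTypes : f ∈ cycleTypes n m ↔ ∑ i : Fin n, ((i : ℕ) + 1) * f i = m := by
  simp only [cycleTypes, mem_filter, Fintype.mem_piFinset, mem_range, and_iff_right_iff_imp]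
  intro hf i
  have := succ_mul_le_of_sum_eq hf i
  nlinarith

theorem cycleTypes_zero : cycleTypes n 0 = {0} := by
  ext f
  simp [mem_cycleTypes, funext_iff]

theorem cycleWeight_nonneg {θ : ℝ} (hθ : 0 ≤ θ) (f : Fin n → ℕ) : 0 ≤ cycleWeight θ f :=
  prod_nonneg fun _ _ ↦ by positivity

theorem sum_succ_mul_add_single (g : Fin n → ℕ) (i : Fin n) :
    ∑ j : Fin n, ((j : ℕ) + 1) * (g + Pi.single i 1 : Fin n → ℕ) j
      = ∑ j : Fin n, ((j : ℕ) + 1) * g j + ((i : ℕ) + 1) := by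
  simp [mul_add, sum_add_distrib, Pi.single_apply]

theorem add_single_mem_cycleTypes_iff {g : Fin n → ℕ} {i : Fin n} :
    g + Pi.single i 1 ∈ cycleTypes n (m + ((i : ℕ) + 1)) ↔ g ∈ cycleTypes n m := by
  rw [mem_cycleTypes, mem_cycleTypes, sum_succ_mul_add_single, Nat.add_right_cancel_iff]

theorem sub_single_add_single {i : Fin n} (hf : f i ≠ 0) :
    f - Pi.single i 1 + Pi.single i 1 = f := by
  ext j
  rcases eq_or_ne j i with rfl | hj
  · simp only [Pi.add_apply, Pi.sub_apply, Pi.single_eq_same]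
    omega
  · simp [hj]

theorem cycleWeight_add_single (θ : ℝ) (g : Fin n → ℕ) (i : Fin n) :
    ((i : ℕ) + 1) * (g i + 1) * cycleWeight θ (g + Pi.single i 1) = θ * cycleWeight θ g := by
  have hrest : ∏ j ∈ univ.erase i,
      (θ / ((j : ℕ) + 1)) ^ (g j + (Pi.single i 1 : Fin n → ℕ) j)
        / (g j + (Pi.single i 1 : Fin n → ℕ) j)!
      = ∏ j ∈ univ.erase i, (θ / ((j : ℕ) + 1)) ^ g j / (g j)! :=
    prod_congr rfl fun j hj ↦ by simp [ne_of_mem_erase hj]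
  simp only [cycleWeight, Pi.add_apply]
  rw [← mul_prod_erase _ _ (mem_univ i), ← mul_prod_erase _ _ (mem_univ i), hrest]
  simp only [Pi.single_eq_same, pow_succ, Nat.factorial_succ]
  push_cast
  field_simp

theorem sum_cycleTypes_add_mul_cycleWeight (θ : ℝ) (i : Fin n) :
    ∑ f ∈ cycleTypes n (m + ((i : ℕ) + 1)), (((i : ℕ) + 1) * f i : ℝ) * cycleWeight θ f
      = θ * ∑ g ∈ cycleTypes n m, cycleWeight θ g := by
  classical
  rw [← sum_filter_of_ne (p := fun f : Fin n → ℕ ↦ f i ≠ 0) fun f _ hf h0 ↦ hf (by simp [h0]),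
    mul_sum]
  refine sum_nbij' (· - Pi.single i 1) (· + Pi.single i 1) ?_ ?_ ?_ ?_ ?_
  · intro f hf
    rw [mem_filter] at hf
    rw [← add_single_mem_cycleTypes_iff, sub_single_add_single hf.2]
    exact hf.1
  · intro g hg
    rw [mem_filter, add_single_mem_cycleTypes_iff]
    simpa using hg
  · intro f hf
    exact sub_single_add_single (mem_filter.1 hf).2
  · intro g _
    exact add_tsub_cancel_right g _
  · intro f hf
    have hfi := (mem_filter.1 hf).2
    have hsub : (((f - Pi.single i 1 : Fin n → ℕ) i : ℕ) + 1 : ℝ) = f i := by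
      norm_cast
      simp only [Pi.sub_apply, Pi.single_eq_same]
      omega
    rw [← cycleWeight_add_single, sub_single_add_single hfi, hsub]

theorem sum_cycleTypes_mul_cycleWeight (θ : ℝ) (i : Fin n) :
    ∑ f ∈ cycleTypes n m, (((i : ℕ) + 1) * f i : ℝ) * cycleWeight θ f
      = if (i : ℕ) < m then θ * ∑ g ∈ cycleTypes n (m - 1 - i), cycleWeight θ g else 0 := by
  split_ifs with him
  · obtain ⟨j, rfl⟩ : ∃ j, m = j + ((i : ℕ) + 1) := ⟨m - 1 - i, by omega⟩
    rw [show j + ((i : ℕ) + 1) - 1 - i = j by omega]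
    exact sum_cycleTypes_add_mul_cycleWeight θ i
  · refine sum_eq_zero fun f hf ↦ ?_
    have := succ_mul_le_of_sum_eq (mem_cycleTypes.1 hf) i
    have hfi : f i = 0 := by nlinarith
    simp [hfi]

theorem natCast_mul_sum_cycleWeight (θ : ℝ) (hmn : m ≤ n) :
    (m : ℝ) * ∑ f ∈ cycleTypes n m, cycleWeight θ f
      = θ * ∑ j ∈ range m, ∑ f ∈ cycleTypes n j, cycleWeight θ f := by
  set a : ℕ → ℝ := fun j ↦ ∑ f ∈ cycleTypes n j, cycleWeight θ f
  calc (m : ℝ) * a m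
      = ∑ f ∈ cycleTypes n m, ∑ i : Fin n, (((i : ℕ) + 1) * f i : ℝ) * cycleWeight θ f := by
        rw [mul_sum]
        refine sum_congr rfl fun f hf ↦ ?_
        rw [← sum_mul, ← mem_cycleTypes.1 hf]
        push_cast
        rfl
    _ = ∑ ℓ ∈ range n, if ℓ < m then θ * a (m - 1 - ℓ) else 0 := by
        rw [sum_comm, ← Fin.sum_univ_eq_sum_range (fun ℓ ↦ if ℓ < m then θ * a (m - 1 - ℓ) else 0)]
        exact sum_congr rfl fun i _ ↦ sum_cycleTypes_mul_cycleWeight θ i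
    _ = ∑ ℓ ∈ range m, θ * a (m - 1 - ℓ) := by
        rw [← sum_filter]
        congr 1
        ext ℓ
        simp only [mem_filter, mem_range]
        omega
    _ = θ * ∑ j ∈ range m, a j := by rw [sum_range_reflect (fun j ↦ θ * a j), mul_sum]

theorem sum_cycleWeight (θ : ℝ) (hmn : m ≤ n) :
    ∑ f ∈ cycleTypes n m, cycleWeight θ f = (∏ i ∈ range m, (θ + i)) / m ! := by
  induction m using Nat.strong_induction_on with
  | _ m ih =>
    rcases Nat.eq_zero_or_pos m with rfl | hm
    · simp [cycleTypes_zero, cycleWeight]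
    · have hrec := natCast_mul_sum_cycleWeight θ hmn
      rw [sum_congr rfl fun j hj ↦ ih j (mem_range.1 hj) ((mem_range.1 hj).le.trans hmn),
        mul_sum_range_prod_add_div_factorial] at hrec
      exact mul_left_cancel₀ (by positivity) hrec

end CycleTypes

section Sequences

variable {n : ℕ} {k : ℕ → ℕ}

theorem tsum_succ_mul_eq_sum_range (hk : ∀ ℓ, n ≤ ℓ → k ℓ = 0) :
    ∑' ℓ : ℕ, ((ℓ + 1) * k ℓ : ℝ≥0∞) = ((∑ ℓ ∈ range n, (ℓ + 1) * k ℓ : ℕ) : ℝ≥0∞) := by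
  rw [tsum_eq_sum (s := range n) fun ℓ hℓ ↦ by simp [hk ℓ (by simpa using hℓ)]]
  push_cast
  rfl

theorem tsum_succ_mul_ne_top (hk : ∀ᶠ ℓ in atTop, k ℓ = 0) :
    ∑' ℓ : ℕ, ((ℓ + 1) * k ℓ : ℝ≥0∞) ≠ ⊤ := by
  obtain ⟨N, hN⟩ := eventually_atTop.1 hk
  rw [tsum_succ_mul_eq_sum_range hN]
  exact ENNReal.natCast_ne_top _

theorem extend_val_eq_zero (f : Fin n → ℕ) {ℓ : ℕ} (hℓ : n ≤ ℓ) : extend Fin.val f 0 ℓ = 0 :=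
  extend_apply' _ _ _ fun ⟨i, hi⟩ ↦ by omega

theorem tsum_succ_mul_eq_natCast_iff :
    ∑' ℓ : ℕ, ((ℓ + 1) * k ℓ : ℝ≥0∞) = n ↔ ∃ f ∈ cycleTypes n n, extend Fin.val f 0 = k := by
  constructor
  · intro h
    have hk : ∀ ℓ, n ≤ ℓ → k ℓ = 0 := by
      intro ℓ hℓ
      have hle : ((ℓ + 1) * k ℓ : ℝ≥0∞) ≤ n := h ▸ ENNReal.le_tsum ℓ
      have : (ℓ + 1) * k ℓ ≤ n := by exact_mod_cast hle
      nlinarith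
    refine ⟨fun i ↦ k i, ?_, ?_⟩
    · rw [mem_cycleTypes, Fin.sum_univ_eq_sum_range (fun ℓ ↦ (ℓ + 1) * k ℓ)]
      exact_mod_cast (tsum_succ_mul_eq_sum_range hk).symm.trans h
    · ext ℓ
      rcases lt_or_ge ℓ n with hℓ | hℓ
      · exact Fin.val_injective.extend_apply _ _ ⟨ℓ, hℓ⟩
      · rw [extend_val_eq_zero _ hℓ, hk ℓ hℓ]
  · rintro ⟨f, hf, rfl⟩
    rw [tsum_succ_mul_eq_sum_range fun ℓ ↦ extend_val_eq_zero f,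
      ← Fin.sum_univ_eq_sum_range (fun ℓ ↦ (ℓ + 1) * extend Fin.val f 0 ℓ)]
    simp only [Fin.val_injective.extend_apply]
    exact_mod_cast mem_cycleTypes.1 hf

end Sequences

theorem ProbabilityTheory.iIndepFun.tendsto_prod_measure_preimage {Ω β : Type*}
    [MeasurableSpace Ω] [MeasurableSpace β] {μ : Measure Ω} [IsFiniteMeasure μ]
    {X : ℕ → Ω → β} (hX : ∀ i, Measurable (X i)) (hind : iIndepFun X μ) {S : ℕ → Set β}
    (hS : ∀ i, MeasurableSet (S i)) :
    Tendsto (fun m ↦ ∏ i ∈ range m, μ (X i ⁻¹' S i)) atTop (𝓝 (μ (⋂ i, X i ⁻¹' S i))) := by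
  have hlim := tendsto_measure_iInter_atTop (μ := μ) (s := fun m ↦ ⋂ i ∈ range m, X i ⁻¹' S i)
    (fun m ↦ (MeasurableSet.biInter (Set.to_countable _) fun i _ ↦ hX i (hS i)).nullMeasurableSet)
    (fun m m' hm ↦ Set.biInter_subset_biInter_left (by simpa using range_subset_range.2 hm))
    ⟨0, measure_ne_top μ _⟩
  have hinter : ⋂ m, ⋂ i ∈ range m, X i ⁻¹' S i = ⋂ i, X i ⁻¹' S i := by
    ext ω
    simp only [Set.mem_iInter, mem_range]
    exact ⟨fun h i ↦ h (i + 1) i i.lt_succ_self, fun h _ i _ ↦ h i⟩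
  rw [hinter] at hlim
  exact hlim.congr fun m ↦ hind.meas_biInter fun i _ ↦ ⟨S i, hS i, rfl⟩

section Poisson

variable {Ω : Type*} [MeasurableSpace Ω] {μ : Measure Ω} {K : ℕ → Ω → ℕ} {r : ℕ → ℝ}

theorem measure_tsum_succ_mul_eq_natCast (hK : ∀ ℓ, Measurable (K ℓ)) (n : ℕ) :
    μ {ω | ∑' ℓ : ℕ, ((ℓ + 1) * K ℓ ω : ℝ≥0∞) = n}
      = ∑ f ∈ cycleTypes n n, μ (⋂ ℓ, {ω | K ℓ ω = extend Fin.val f 0 ℓ}) := by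
  set C : (Fin n → ℕ) → Set Ω := fun f ↦ ⋂ ℓ, {ω | K ℓ ω = extend Fin.val f 0 ℓ}
  have hevent : {ω | ∑' ℓ : ℕ, ((ℓ + 1) * K ℓ ω : ℝ≥0∞) = n} = ⋃ f ∈ cycleTypes n n, C f := by
    ext ω
    simp only [C, Set.mem_ofPred_eq, Set.mem_iUnion, Set.mem_iInter, exists_prop]
    exact tsum_succ_mul_eq_natCast_iff.trans (by simp only [funext_iff, eq_comm])
  have hdisj : (cycleTypes n n : Set (Fin n → ℕ)).PairwiseDisjoint C := by
    intro f _ g _ hfg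
    refine Set.disjoint_left.2 fun ω hωf hωg ↦ hfg (extend_injective Fin.val_injective 0 ?_)
    ext ℓ
    simp only [C, Set.mem_iInter, Set.mem_ofPred_eq] at hωf hωg
    exact (hωf ℓ).symm.trans (hωg ℓ)
  rw [hevent, measure_biUnion_finset hdisj fun f _ ↦
    MeasurableSet.iInter fun ℓ ↦ hK ℓ (measurableSet_singleton _)]

theorem measure_iInter_eq_of_poisson [IsFiniteMeasure μ] (hK : ∀ ℓ, Measurable (K ℓ))
    (hind : iIndepFun K μ) (hr0 : ∀ ℓ, 0 ≤ r ℓ) {Λ : ℝ} (hr : HasSum r Λ)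
    (hpois : ∀ ℓ k, μ {ω | K ℓ ω = k} = ENNReal.ofReal (Real.exp (-r ℓ) * r ℓ ^ k / k !))
    {n : ℕ} {a : ℕ → ℕ} (ha : ∀ ℓ, n ≤ ℓ → a ℓ = 0) :
    μ (⋂ ℓ, {ω | K ℓ ω = a ℓ})
      = ENNReal.ofReal (Real.exp (-Λ) * ∏ ℓ ∈ range n, r ℓ ^ a ℓ / (a ℓ)!) := by
  set P := ∏ ℓ ∈ range n, r ℓ ^ a ℓ / (a ℓ)!
  have hprod : ∀ m ≥ n, ∏ ℓ ∈ range m, μ {ω | K ℓ ω = a ℓ}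
      = ENNReal.ofReal (Real.exp (-∑ ℓ ∈ range m, r ℓ) * P) := by
    intro m hm
    simp_rw [hpois, mul_div_assoc]
    rw [← ENNReal.ofReal_prod_of_nonneg fun ℓ _ ↦ by have := hr0 ℓ; positivity,
      prod_mul_distrib, ← sum_neg_distrib, Real.exp_sum,
      ← prod_subset (f := fun ℓ ↦ r ℓ ^ a ℓ / (a ℓ)!) (range_subset_range.2 hm)
        fun ℓ _ hℓ ↦ by simp [ha ℓ (by simpa using hℓ)]]
  have hlim : Tendsto (fun m ↦ ENNReal.ofReal (Real.exp (-∑ ℓ ∈ range m, r ℓ) * P)) atTop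
      (𝓝 (ENNReal.ofReal (Real.exp (-Λ) * P))) :=
    ENNReal.tendsto_ofReal (hr.tendsto_sum_nat.neg.rexp.mul_const P)
  exact tendsto_nhds_unique ((hind.tendsto_prod_measure_preimage hK
    fun ℓ ↦ measurableSet_singleton (a ℓ)).congr' (eventually_atTop.2 ⟨n, hprod⟩)) hlim

theorem ae_eventually_eq_zero_of_poisson [IsProbabilityMeasure μ] (hK : ∀ ℓ, Measurable (K ℓ))
    (hr0 : ∀ ℓ, 0 ≤ r ℓ) (hr : Summable r)
    (hzero : ∀ ℓ, μ {ω | K ℓ ω = 0} = ENNReal.ofReal (Real.exp (-r ℓ))) :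
    ∀ᵐ ω ∂μ, ∀ᶠ ℓ in atTop, K ℓ ω = 0 := by
  have hle : ∀ ℓ, μ {ω | K ℓ ω = 0}ᶜ ≤ ENNReal.ofReal (r ℓ) := by
    intro ℓ
    rw [prob_compl_eq_one_sub (s := {ω | K ℓ ω = 0}) (hK ℓ (measurableSet_singleton 0)), hzero,
      ← ENNReal.ofReal_one, ← ENNReal.ofReal_sub _ (Real.exp_pos _).le]
    exact ENNReal.ofReal_le_ofReal (by linarith [Real.add_one_le_exp (-r ℓ)])
  have hsum : ∑' ℓ, μ {ω | K ℓ ω = 0}ᶜ ≠ ⊤ :=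
    ne_top_of_le_ne_top (ENNReal.ofReal_tsum_of_nonneg hr0 hr ▸ ENNReal.ofReal_ne_top)
      (ENNReal.tsum_le_tsum hle)
  filter_upwards [ae_eventually_notMem hsum] with ω hω
  simpa using hω

end Poisson

theorem prod_range_pow_div_factorial_extend (θ q : ℝ) {n m : ℕ} {f : Fin n → ℕ}
    (hf : f ∈ cycleTypes n m) :
    ∏ ℓ ∈ range n, (θ * q ^ (ℓ + 1) / (ℓ + 1)) ^ extend Fin.val f 0 ℓ / (extend Fin.val f 0 ℓ)!
      = q ^ m * cycleWeight θ f := by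
  rw [← Fin.prod_univ_eq_prod_range
    (fun ℓ ↦ (θ * q ^ (ℓ + 1) / (ℓ + 1)) ^ extend Fin.val f 0 ℓ / (extend Fin.val f 0 ℓ)!)]
  simp only [Fin.val_injective.extend_apply]
  have hsplit : ∀ i : Fin n, (θ * q ^ ((i : ℕ) + 1) / ((i : ℕ) + 1)) ^ f i / (f i)!
      = q ^ (((i : ℕ) + 1) * f i) * ((θ / ((i : ℕ) + 1)) ^ f i / (f i)!) := fun i ↦ by
    rw [pow_mul]
    ring
  rw [prod_congr rfl fun i _ ↦ hsplit i, prod_mul_distrib, prod_pow_eq_pow_sum,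
    mem_cycleTypes.1 hf, cycleWeight]

/-- Let `(K_ℓ)_{ℓ ≥ 1}` (indexed here by `ℓ : ℕ` standing for `ℓ+1`) be independent
Poisson variables with means `θ(1-p)^ℓ/ℓ`.  Then `N = Σ_ℓ ℓ K_ℓ` is a.s. finite and
has the negative binomial distribution `P(N = n) = ((θ)_n/n!)(1-p)^n p^θ`. -/
theorem sum_poisson_negBinomial (θ p : ℝ) (hθ : 0 < θ) (hp : p ∈ Set.Ioo (0 : ℝ) 1)
    {Ω : Type*} [MeasurableSpace Ω] (μ : Measure Ω) [IsProbabilityMeasure μ]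
    (K : ℕ → Ω → ℕ) (hmeas : ∀ ℓ, Measurable (K ℓ))
    (hind : iIndepFun K μ)
    (hpois : ∀ ℓ : ℕ, ∀ k : ℕ,
      μ {ω | K ℓ ω = k}
        = ENNReal.ofReal (Real.exp (-(θ * (1 - p) ^ (ℓ + 1) / (ℓ + 1)))
            * (θ * (1 - p) ^ (ℓ + 1) / (ℓ + 1)) ^ k / k.factorial)) :
    (∀ᵐ ω ∂μ, (∑' ℓ : ℕ, ((ℓ + 1) * K ℓ ω : ℝ≥0∞)) ≠ ⊤) ∧
    ∀ n : ℕ,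
      μ {ω | (∑' ℓ : ℕ, ((ℓ + 1) * K ℓ ω : ℝ≥0∞)) = n}
        = ENNReal.ofReal
            ((∏ i ∈ Finset.range n, (θ + i)) / n.factorial * (1 - p) ^ n * p ^ θ) := by
  obtain ⟨hp0, hp1⟩ := hp
  set r : ℕ → ℝ := fun ℓ ↦ θ * (1 - p) ^ (ℓ + 1) / (ℓ + 1)
  have hr0 : ∀ ℓ, 0 ≤ r ℓ := fun ℓ ↦ by have := sub_pos.2 hp1; positivity
  have hr : HasSum r (-(θ * Real.log p)) := by
    have h := (Real.hasSum_pow_div_log_of_abs_lt_one (x := 1 - p)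
      (abs_lt.2 ⟨by linarith, by linarith⟩)).mul_left θ
    simpa [r, mul_div_assoc] using h
  refine ⟨?_, fun n ↦ ?_⟩
  · filter_upwards [ae_eventually_eq_zero_of_poisson hmeas hr0 hr.summable
      fun ℓ ↦ by simpa using hpois ℓ 0] with ω hω
    exact tsum_succ_mul_ne_top hω
  have hC : ∀ f ∈ cycleTypes n n, μ (⋂ ℓ, {ω | K ℓ ω = extend Fin.val f 0 ℓ})
      = ENNReal.ofReal (p ^ θ * (1 - p) ^ n * cycleWeight θ f) := fun f hf ↦ by
    rw [measure_iInter_eq_of_poisson hmeas hind hr0 hr hpois (fun ℓ ↦ extend_val_eq_zero f),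
      prod_range_pow_div_factorial_extend θ (1 - p) hf, neg_neg, Real.rpow_def_of_pos hp0,
      mul_comm (Real.log p), mul_assoc]
  rw [measure_tsum_succ_mul_eq_natCast hmeas, sum_congr rfl hC,
    ← ENNReal.ofReal_sum_of_nonneg fun f _ ↦ by
      have := cycleWeight_nonneg hθ.le f; have := sub_pos.2 hp1; positivity,
    ← mul_sum, sum_cycleWeight θ le_rfl]
  ring_nf
end
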